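/- arXiv:quant-ph/0209166 — 5 statements merged into one kernel-verified Lean document; each statement's English description precedes it below -/
import Mathlib

section
/- For every square complex matrix O there exists a unitary matrix K such that Oᵀ = K O K*, where Oᵀ is the transpose of O and K* is the entrywise complex conjugate of K. Explicitly, if O = X Σ Y is a singular value decomposition of O, one may take K = Y_{Oᵀ} X_O†, i.e., the product of the left-unitary of an SVD of Oᵀ with the adjoint of the left-unitary of an SVD of O sharing the same diagonal factor Σ. -/
open Matrix

/-- The `n × m` "diagonal" matrix with `σ 0, σ 1, …` on the main diagonal. -/
def svdDiag (n m : ℕ) (σ : ℕ → ℝ) : Matrix (Fin n) (Fin m) ℂ :=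
  Matrix.of fun i j => if (i : ℕ) = (j : ℕ) then (σ (i : ℕ) : ℂ) else 0

/-- The Moore–Penrose pseudoinverse of `svdDiag n m σ`: diagonal with entries `σᵢ⁻¹`
where `σᵢ ≠ 0` and `0` where `σᵢ = 0` (note `(0 : ℝ)⁻¹ = 0`). -/
noncomputable def svdDiagPinv (n m : ℕ) (σ : ℕ → ℝ) : Matrix (Fin m) (Fin n) ℂ :=
  Matrix.of fun i j => if (i : ℕ) = (j : ℕ) then ((σ (i : ℕ))⁻¹ : ℂ) else 0

/-- `O = X Σ Y` is a singular value decomposition of `O` : `X`, `Y` unitary and `Σ` the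
diagonal matrix of the singular values `σ 0 ≥ σ 1 ≥ … ≥ 0` in decreasing order
(padded with zeros beyond `min n m`). -/
def IsSVD {n m : ℕ} (O : Matrix (Fin n) (Fin m) ℂ) (X : Matrix (Fin n) (Fin n) ℂ)
    (σ : ℕ → ℝ) (Y : Matrix (Fin m) (Fin m) ℂ) : Prop :=
  X ∈ Matrix.unitaryGroup (Fin n) ℂ ∧ Y ∈ Matrix.unitaryGroup (Fin m) ℂ ∧
  (∀ i, 0 ≤ σ i) ∧ Antitone σ ∧ (∀ i, min n m ≤ i → σ i = 0) ∧
  O = X * svdDiag n m σ * Y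

/-!
If `O = X Σ Y` with `X`, `Y` unitary, then `Σ` is real diagonal, hence symmetric, so
`Oᵀ = Yᵀ Σ Xᵀ` is again an SVD, and substituting `Σ = Xᴴ O Yᴴ` gives
`Oᵀ = (Yᵀ Xᴴ) O (Yᴴ Xᵀ)`, where `Yᴴ Xᵀ` is the entrywise conjugate of `K = Yᵀ Xᴴ`.

An SVD exists because the images `T bᵢ` of an eigenbasis of `T† T` (ordered by decreasing
eigenvalue) are pairwise orthogonal with norms `σᵢ`; normalizing the nonzero ones and completing
them to an orthonormal basis `uᵢ` gives `T bᵢ = σᵢ uᵢ`.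
-/

theorem exists_orthonormalBasis_smul_eq_of_pairwise_inner_eq_zero
    {𝕜 E ι : Type*} [RCLike 𝕜] [NormedAddCommGroup E] [InnerProductSpace 𝕜 E]
    [FiniteDimensional 𝕜 E] [Fintype ι]
    (card : Module.finrank 𝕜 E = Fintype.card ι) {v : ι → E}
    (hv : Pairwise fun i j => inner 𝕜 (v i) (v j) = 0) :
    ∃ u : OrthonormalBasis ι 𝕜 E, ∀ i, v i = (‖v i‖ : 𝕜) • u i := by
  have hw : Orthonormal 𝕜 ({i | v i ≠ 0}.domRestrict fun i => (‖v i‖⁻¹ : 𝕜) • v i) := by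
    refine ⟨fun i => ?_, fun i j hij => ?_⟩
    · simp [Set.domRestrict_apply, norm_smul, inv_mul_cancel₀ (norm_ne_zero_iff.mpr i.2)]
    · simp [Set.domRestrict_apply, inner_smul_left, inner_smul_right,
        hv (Subtype.coe_ne_coe.mpr hij)]
  obtain ⟨u, hu⟩ := hw.exists_orthonormalBasis_extension_of_card_eq card
  refine ⟨u, fun i => ?_⟩
  by_cases hi : v i = 0
  · simp [hi]
  · rw [hu i hi, smul_smul, mul_inv_cancel₀ (by simpa), one_smul]

namespace LinearMap

open Module

variable {𝕜 E F : Type*} [RCLike 𝕜] [NormedAddCommGroup E] [InnerProductSpace 𝕜 E]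
  [FiniteDimensional 𝕜 E] [NormedAddCommGroup F] [InnerProductSpace 𝕜 F] [FiniteDimensional 𝕜 F]

theorem inner_apply_eigenvectorBasis_adjoint_comp_self (T : E →ₗ[𝕜] F) {n : ℕ}
    (hn : finrank 𝕜 E = n) (i j : Fin n) :
    inner 𝕜 (T (T.isSymmetric_adjoint_comp_self.eigenvectorBasis hn i))
      (T (T.isSymmetric_adjoint_comp_self.eigenvectorBasis hn j)) =
      if i = j then ((T.singularValues i ^ 2 : ℝ) : 𝕜) else 0 := by
  rw [← adjoint_inner_right, ← comp_apply, T.isSymmetric_adjoint_comp_self.apply_eigenvectorBasis,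
    inner_smul_right, orthonormal_iff_ite.mp (OrthonormalBasis.orthonormal _),
    T.sq_singularValues_fin hn]
  split_ifs with h <;> simp [h]

theorem norm_apply_eigenvectorBasis_adjoint_comp_self (T : E →ₗ[𝕜] F) {n : ℕ}
    (hn : finrank 𝕜 E = n) (i : Fin n) :
    ‖T (T.isSymmetric_adjoint_comp_self.eigenvectorBasis hn i)‖ = T.singularValues i := by
  have h := T.inner_apply_eigenvectorBasis_adjoint_comp_self hn i i
  rw [if_pos rfl, inner_self_eq_norm_sq_to_K] at h
  exact (pow_left_inj₀ (norm_nonneg _) (T.singularValues_nonneg i) two_ne_zero).mp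
    (by exact_mod_cast h)

theorem exists_orthonormalBasis_apply_eq_singularValues_smul (T : E →ₗ[𝕜] F) {n : ℕ}
    (hE : finrank 𝕜 E = n) (hF : finrank 𝕜 F = n) :
    ∃ (b : OrthonormalBasis (Fin n) 𝕜 E) (u : OrthonormalBasis (Fin n) 𝕜 F),
      ∀ i, T (b i) = (T.singularValues i : 𝕜) • u i := by
  let b := T.isSymmetric_adjoint_comp_self.eigenvectorBasis hE
  have horth : Pairwise fun i j => inner 𝕜 (T (b i)) (T (b j)) = 0 := fun i j hij => by
    simp [b, T.inner_apply_eigenvectorBasis_adjoint_comp_self hE, hij]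
  obtain ⟨u, hu⟩ := exists_orthonormalBasis_smul_eq_of_pairwise_inner_eq_zero
    (hF.trans (Fintype.card_fin n).symm) horth
  refine ⟨b, u, fun i => ?_⟩
  rw [hu i, T.norm_apply_eigenvectorBasis_adjoint_comp_self hE]

end LinearMap

theorem svdDiag_transpose (n m : ℕ) (σ : ℕ → ℝ) : (svdDiag n m σ)ᵀ = svdDiag m n σ := by
  ext i j
  simp only [svdDiag, transpose_apply, of_apply, eq_comm (a := (j : ℕ))]
  split_ifs with h <;> simp [h]

theorem svdDiag_self (n : ℕ) (σ : ℕ → ℝ) :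
    svdDiag n n σ = diagonal fun i : Fin n => (σ i : ℂ) := by
  ext i j
  simp [svdDiag, diagonal_apply, Fin.val_inj]

theorem exists_isSVD {n : ℕ} (O : Matrix (Fin n) (Fin n) ℂ) : ∃ X σ Y, IsSVD O X σ Y := by
  let e := EuclideanSpace.basisFun (Fin n) ℂ
  let T := toEuclideanLin O
  obtain ⟨b, u, hTb⟩ := T.exists_orthonormalBasis_apply_eq_singularValues_smul
    finrank_euclideanSpace_fin finrank_euclideanSpace_fin
  let V := e.toBasis.toMatrix b
  have hV : V ∈ unitaryGroup (Fin n) ℂ := e.toMatrix_orthonormalBasis_mem_unitary b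
  have hOV : O * V = e.toBasis.toMatrix u * svdDiag n n T.singularValues := by
    ext i j
    have := congr(($(hTb j)) i)
    rw [svdDiag_self, mul_diagonal]
    simpa [mul_apply, Module.Basis.toMatrix_apply, mulVec, dotProduct, V, e, T, mul_comm]
      using this
  refine ⟨_, T.singularValues, Vᴴ, e.toMatrix_orthonormalBasis_mem_unitary u, Unitary.star_mem hV,
    T.singularValues_nonneg, T.singularValues_antitone,
    fun i hi => T.singularValues_of_finrank_le (by simpa using hi), ?_⟩
  calc O = O * V * Vᴴ := by
        rw [mul_assoc, ← star_eq_conjTranspose, mem_unitaryGroup_iff.mp hV, mul_one]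
    _ = _ := by rw [hOV]

theorem IsSVD.transpose {n m : ℕ} {O : Matrix (Fin n) (Fin m) ℂ} {X : Matrix (Fin n) (Fin n) ℂ}
    {σ : ℕ → ℝ} {Y : Matrix (Fin m) (Fin m) ℂ} (h : IsSVD O X σ Y) : IsSVD Oᵀ Yᵀ σ Xᵀ := by
  obtain ⟨hX, hY, hσ_nonneg, hσ_anti, hσ_zero, rfl⟩ := h
  refine ⟨transpose_mem_unitaryGroup_iff.mpr hY, transpose_mem_unitaryGroup_iff.mpr hX,
    hσ_nonneg, hσ_anti, fun i hi => hσ_zero i (min_comm m n ▸ hi), ?_⟩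
  rw [transpose_mul, transpose_mul, svdDiag_transpose, Matrix.mul_assoc]

theorem transpose_eq_mul_mul_map_starRingEnd {R ι : Type*} [CommRing R] [StarRing R] [Fintype ι]
    [DecidableEq ι] {O X D Y : Matrix ι ι R}
    (hX : X ∈ unitaryGroup ι R) (hY : Y ∈ unitaryGroup ι R) (hD : Dᵀ = D) (hO : O = X * D * Y) :
    Oᵀ = (Yᵀ * Xᴴ) * O * (Yᵀ * Xᴴ).map (starRingEnd R) := by
  have hXX : Xᴴ * X = 1 := mem_unitaryGroup_iff'.mp hX
  have hYY : Y * Yᴴ = 1 := mem_unitaryGroup_iff.mp hY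
  have hK : (Yᵀ * Xᴴ).map (starRingEnd R) = Yᴴ * Xᵀ := by
    rw [Matrix.map_mul]
    congr 1
    ext
    simp [starRingEnd_apply]
  rw [hK]
  calc Oᵀ = Yᵀ * D * Xᵀ := by rw [hO, transpose_mul, transpose_mul, hD, mul_assoc]
    _ = Yᵀ * (Xᴴ * X) * D * (Y * Yᴴ) * Xᵀ := by rw [hXX, hYY, mul_one, mul_one]
    _ = Yᵀ * Xᴴ * O * (Yᴴ * Xᵀ) := by simp only [hO, mul_assoc]

/-- **Unitary implementation of transposition.** For every square complex matrix `O` there is a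
unitary `K` with `Oᵀ = K O K*` (`K*` the entrywise conjugate). Explicitly, given any SVD
`O = X Σ Y`, one may take `K = Y_{Oᵀ} X†`, the product of the left-unitary `X'` of an SVD of `Oᵀ`
sharing the same diagonal factor `Σ` with the adjoint of `X`. -/
theorem transposition_by_unitary {n : ℕ} (O : Matrix (Fin n) (Fin n) ℂ) :
    (∃ K ∈ Matrix.unitaryGroup (Fin n) ℂ, Oᵀ = K * O * K.map (starRingEnd ℂ)) ∧
    (∀ (X : Matrix (Fin n) (Fin n) ℂ) (σ : ℕ → ℝ) (Y : Matrix (Fin n) (Fin n) ℂ),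
      IsSVD O X σ Y →
      ∃ (X' : Matrix (Fin n) (Fin n) ℂ) (Y' : Matrix (Fin n) (Fin n) ℂ),
        IsSVD Oᵀ X' σ Y' ∧
        X' * Xᴴ ∈ Matrix.unitaryGroup (Fin n) ℂ ∧
        Oᵀ = (X' * Xᴴ) * O * (X' * Xᴴ).map (starRingEnd ℂ)) := by
  have of_isSVD : ∀ X σ Y, IsSVD O X σ Y →
      ∃ X' Y', IsSVD Oᵀ X' σ Y' ∧ X' * Xᴴ ∈ unitaryGroup (Fin n) ℂ ∧
        Oᵀ = (X' * Xᴴ) * O * (X' * Xᴴ).map (starRingEnd ℂ) := by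
    intro X σ Y h
    refine ⟨Yᵀ, Xᵀ, h.transpose, ?_⟩
    obtain ⟨hX, hY, -, -, -, hO⟩ := h
    exact ⟨mul_mem (transpose_mem_unitaryGroup_iff.mpr hY) (Unitary.star_mem hX),
      transpose_eq_mul_mul_map_starRingEnd hX hY (svdDiag_transpose n n σ) hO⟩
  refine ⟨?_, of_isSVD⟩
  obtain ⟨X, σ, Y, h⟩ := exists_isSVD O
  obtain ⟨X', -, -, hK, hO⟩ := of_isSVD X σ Y h
  exact ⟨_, hK, hO⟩
end

section
/- Let x, y ∈ ℝᴺ. If x is supermajorized by y (x ≺^w y), then there exists v ∈ ℝᴺ with v_i ≥ y_i for every i = 1,…,N such that x is majorized by v (x ≺ v). Explicitly, if y is arranged in decreasing order, one may take v = (q − p + y₁, y₂, …, y_N) where q = ∑ᵢ xᵢ and p = ∑ᵢ yᵢ. -/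
/-- The decreasing rearrangement `x↓` of a vector `x ∈ ℝᴺ`. -/
noncomputable def decRearrange {N : ℕ} (x : Fin N → ℝ) : Fin N → ℝ :=
  fun i => x (Tuple.sort x i.rev)

/-- `∑_{i=1}^{k} x↓_i`, the sum of the `k` largest entries of `x` (0-indexed: indices `< k`). -/
noncomputable def topSum {N : ℕ} (x : Fin N → ℝ) (k : ℕ) : ℝ :=
  ∑ i ∈ Finset.univ.filter (fun i : Fin N => (i : ℕ) < k), decRearrange x i

/-- `∑_{i=l+1}^{N} x↓_i` (1-indexed), i.e. the sum of `x↓_i` over 0-indexed indices `i ≥ l`. -/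
noncomputable def botSum {N : ℕ} (x : Fin N → ℝ) (l : ℕ) : ℝ :=
  ∑ i ∈ Finset.univ.filter (fun i : Fin N => l ≤ (i : ℕ)), decRearrange x i

/-- `x ≺ y` : `x` is majorized by `y`. -/
noncomputable def IsMajorizedBy {N : ℕ} (x y : Fin N → ℝ) : Prop :=
  (∀ k : ℕ, topSum x k ≤ topSum y k) ∧ (∑ i, x i = ∑ i, y i)

/-- `x ≺_w y` : `x` is submajorized (weakly majorized from below) by `y`. -/
noncomputable def IsSubmajorizedBy {N : ℕ} (x y : Fin N → ℝ) : Prop :=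
  ∀ k : ℕ, topSum x k ≤ topSum y k

/-- `x ≺^w y` : `x` is supermajorized (weakly majorized from above) by `y`:
`∑_{i=l}^{N} x↓_i ≥ ∑_{i=l}^{N} y↓_i` for all `l`. -/
noncomputable def IsSupermajorizedBy {N : ℕ} (x y : Fin N → ℝ) : Prop :=
  ∀ l : ℕ, botSum y l ≤ botSum x l

/-! The witness `v` is `y` sorted decreasingly with the surplus `∑ x - ∑ y ≥ 0` added to its
largest entry: this raises every partial sum `∑_{i<k} v↓_i` (`k ≥ 1`) to `∑ x - ∑_{i≥k} y↓_i`,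
which dominates `∑ x - ∑_{i≥k} x↓_i = ∑_{i<k} x↓_i` by supermajorization. In general `y` is a
permutation of `y↓`, and majorization is insensitive to permuting the majorizing vector. -/

section Rearrangement

variable {N : ℕ}

theorem antitone_decRearrange (x : Fin N → ℝ) : Antitone (decRearrange x) :=
  fun _ _ hij => Tuple.monotone_sort x (Fin.rev_le_rev.2 hij)

theorem decRearrange_eq_self {y : Fin N → ℝ} (hy : Antitone y) : decRearrange y = y := by
  have hsort : y ∘ Fin.revPerm = y ∘ Tuple.sort y :=
    Tuple.comp_sort_eq_comp_iff_monotone.2 fun _ _ hij => hy (Fin.rev_le_rev.2 hij)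
  funext i
  simpa [decRearrange] using (congrFun hsort i.rev).symm

theorem decRearrange_comp_perm (y : Fin N → ℝ) (σ : Equiv.Perm (Fin N)) :
    decRearrange (y ∘ σ) = decRearrange y :=
  funext fun i => congrFun (Tuple.comp_perm_comp_sort_eq_comp_sort (f := y) (σ := σ)) i.rev

theorem decRearrange_decRearrange (y : Fin N → ℝ) :
    decRearrange (decRearrange y) = decRearrange y :=
  decRearrange_eq_self (antitone_decRearrange y)

theorem exists_perm_decRearrange_comp_eq (y : Fin N → ℝ) :
    ∃ σ : Equiv.Perm (Fin N), decRearrange y ∘ σ = y :=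
  ⟨(Tuple.sort y)⁻¹.trans Fin.revPerm, funext fun i => by simp [decRearrange]⟩

theorem sum_decRearrange (x : Fin N → ℝ) : ∑ i, decRearrange x i = ∑ i, x i :=
  Equiv.sum_comp (Fin.revPerm.trans (Tuple.sort x)) x

end Rearrangement

section PartialSums

variable {N : ℕ}

theorem topSum_zero (x : Fin N → ℝ) : topSum x 0 = 0 := by
  simp [topSum]

theorem botSum_zero (x : Fin N → ℝ) : botSum x 0 = ∑ i, x i := by
  simpa [botSum] using sum_decRearrange x

theorem topSum_add_botSum (x : Fin N → ℝ) (k : ℕ) : topSum x k + botSum x k = ∑ i, x i := by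
  simp only [topSum, botSum, ← not_lt]
  rw [Finset.sum_filter_add_sum_filter_not, sum_decRearrange]

theorem topSum_comp_perm (y : Fin N → ℝ) (σ : Equiv.Perm (Fin N)) (k : ℕ) :
    topSum (y ∘ σ) k = topSum y k := by
  rw [topSum, topSum, decRearrange_comp_perm]

theorem botSum_decRearrange (y : Fin N → ℝ) (l : ℕ) : botSum (decRearrange y) l = botSum y l := by
  rw [botSum, botSum, decRearrange_decRearrange]

theorem topSum_eq_sum_of_antitone {y : Fin N → ℝ} (hy : Antitone y) (k : ℕ) :
    topSum y k = ∑ i ∈ Finset.univ.filter (fun i : Fin N => (i : ℕ) < k), y i := by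
  rw [topSum, decRearrange_eq_self hy]

end PartialSums

section Majorization

variable {N : ℕ} {x y : Fin N → ℝ}

theorem IsMajorizedBy.comp_perm (h : IsMajorizedBy x y) (σ : Equiv.Perm (Fin N)) :
    IsMajorizedBy x (y ∘ σ) :=
  ⟨fun k => (topSum_comp_perm y σ k).symm ▸ h.1 k, h.2.trans (Equiv.sum_comp σ y).symm⟩

theorem IsSupermajorizedBy.decRearrange_right (h : IsSupermajorizedBy x y) :
    IsSupermajorizedBy x (decRearrange y) :=
  fun l => (botSum_decRearrange y l).symm ▸ h l

theorem IsSupermajorizedBy.sum_le (h : IsSupermajorizedBy x y) : ∑ i, y i ≤ ∑ i, x i := by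
  simpa only [botSum_zero] using h 0

end Majorization

section AddToFirst

variable {N : ℕ}

def addToFirst (c : ℝ) (y : Fin N → ℝ) : Fin N → ℝ :=
  fun i => if i.val = 0 then c + y i else y i

theorem le_addToFirst {c : ℝ} (hc : 0 ≤ c) (y : Fin N → ℝ) (i : Fin N) :
    y i ≤ addToFirst c y i := by
  unfold addToFirst
  split_ifs <;> linarith

theorem antitone_addToFirst {c : ℝ} (hc : 0 ≤ c) {y : Fin N → ℝ} (hy : Antitone y) :
    Antitone (addToFirst c y) := by
  intro i j hij
  by_cases hj : j.val = 0
  · rw [Fin.ext (show i.val = j.val by have : i.val ≤ j.val := hij; omega)]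
  · simp only [addToFirst, if_neg hj]
    exact (hy hij).trans (le_addToFirst hc y i)

theorem sum_addToFirst_of_zero_mem [NeZero N] (c : ℝ) (y : Fin N → ℝ) {s : Finset (Fin N)}
    (hs : 0 ∈ s) : ∑ i ∈ s, addToFirst c y i = c + ∑ i ∈ s, y i := by
  have hsplit : ∀ i, addToFirst c y i = y i + if i = 0 then c else 0 := fun i => by
    simp only [addToFirst, Fin.val_eq_zero_iff]
    split_ifs <;> ring
  simp only [hsplit, Finset.sum_add_distrib, Finset.sum_ite_eq', if_pos hs]
  ring

end AddToFirst

theorem isMajorizedBy_addToFirst {N : ℕ} {x y : Fin N → ℝ} (h : IsSupermajorizedBy x y)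
    (hy : Antitone y) : IsMajorizedBy x (addToFirst ((∑ i, x i) - ∑ i, y i) y) := by
  rcases N.eq_zero_or_pos with rfl | hN
  · simp [IsMajorizedBy, topSum]
  have : NeZero N := ⟨hN.ne'⟩
  set c := (∑ i, x i) - ∑ i, y i
  have hv : Antitone (addToFirst c y) := antitone_addToFirst (sub_nonneg.2 h.sum_le) hy
  refine ⟨fun k => ?_, ?_⟩
  · rcases k.eq_zero_or_pos with rfl | hk
    · rw [topSum_zero, topSum_zero]
    have htop : topSum (addToFirst c y) k = c + topSum y k := by
      rw [topSum_eq_sum_of_antitone hv, topSum_eq_sum_of_antitone hy,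
        sum_addToFirst_of_zero_mem c y (by simpa using hk)]
    linarith [h k, topSum_add_botSum x k, topSum_add_botSum y k]
  · rw [sum_addToFirst_of_zero_mem c y (Finset.mem_univ 0)]
    ring

/-- **Lemma 1.** If `x ≺^w y` then there is `v` with `vᵢ ≥ yᵢ` for all `i` and `x ≺ v`.
Explicitly, if `y` is arranged in decreasing order, one may take
`v = (q − p + y₁, y₂, …, y_N)` where `q = ∑ᵢ xᵢ` and `p = ∑ᵢ yᵢ`. -/
theorem supermajorized_exists_pointwise_ge_majorizing {N : ℕ} (x y : Fin N → ℝ)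
    (h : IsSupermajorizedBy x y) :
    (∃ v : Fin N → ℝ, (∀ i, y i ≤ v i) ∧ IsMajorizedBy x v) ∧
    (Antitone y → ∀ v : Fin N → ℝ,
      v = (fun i : Fin N => if i.val = 0 then (∑ j, x j) - (∑ j, y j) + y i else y i) →
      (∀ i, y i ≤ v i) ∧ IsMajorizedBy x v) := by
  refine ⟨?_, fun hy v hv => hv ▸ ⟨le_addToFirst (sub_nonneg.2 h.sum_le) y,
    isMajorizedBy_addToFirst h hy⟩⟩
  obtain ⟨σ, hσ⟩ := exists_perm_decRearrange_comp_eq y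
  have h' := h.decRearrange_right
  refine ⟨addToFirst ((∑ i, x i) - ∑ i, decRearrange y i) (decRearrange y) ∘ σ, fun i => ?_,
    (isMajorizedBy_addToFirst h' (antitone_decRearrange y)).comp_perm σ⟩
  calc y i = decRearrange y (σ i) := (congrFun hσ i).symm
    _ ≤ _ := le_addToFirst (sub_nonneg.2 h'.sum_le) _ _
end

section
/- Let A and B be n×m complex matrices and 0 < p ≤ 1, and suppose that p·σ_i(B)² ≤ σ_i(A)² for every i, where σ₁ ≥ σ₂ ≥ … denote the singular values in decreasing order. Then there exist an n×n contraction M and an m×m unitary U such that M A Uᵀ = √p B. Explicitly, given SVDs A = X_A Σ_A Y_A and B = X_B Σ_B Y_B, one may take M = √p X_B Σ_B Σ_A‡ X_A† and U = Y_Bᵀ Y_A*. -/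
open Matrix

/-- `M` is a contraction: its operator norm (as an operator on `EuclideanSpace ℂ (Fin n)`,
i.e. the l2 operator norm) is at most 1. -/
def IsContraction {n : ℕ} (M : Matrix (Fin n) (Fin n) ℂ) : Prop :=
  ‖Matrix.toEuclideanCLM (𝕜 := ℂ) M‖ ≤ 1

/-!
The matrix `D = √p Σ_B Σ_A‡` is diagonal with entries `√p σᵢ(B) / σᵢ(A)` of modulus at most `1`,
so `M = X_B D X_A†` is a contraction, the unitaries not changing the operator norm. As
`σᵢ(A) = 0` forces `σᵢ(B) = 0`, we have `D Σ_A = √p Σ_B`; and `Uᵀ = Y_A† Y_B`, so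
`M A Uᵀ = X_B D Σ_A Y_B = √p B`.
-/

open scoped Matrix.Norms.L2Operator

section

variable {n m : ℕ}

theorem smul_svdDiag (c : ℝ) (σ : ℕ → ℝ) : c • svdDiag n m σ = svdDiag n m (c • σ) := by
  ext i j
  by_cases h : (i : ℕ) = j <;> simp [svdDiag, h]

theorem svdDiag_mul_svdDiagPinv (σ τ : ℕ → ℝ) :
    svdDiag n m σ * svdDiagPinv n m τ =
      diagonal fun i : Fin n => if (i : ℕ) < m then ((σ i / τ i : ℝ) : ℂ) else 0 := by
  ext i j
  simp only [mul_apply, svdDiag, svdDiagPinv, of_apply, ite_mul, zero_mul]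
  by_cases him : (i : ℕ) < m
  · have hk : ∀ k : Fin m, (i : ℕ) = k ↔ (⟨i, him⟩ : Fin m) = k := fun k => by simp [Fin.ext_iff]
    simp_rw [hk, Finset.sum_ite_eq, Finset.mem_univ, if_true]
    by_cases hij : i = j
    · subst hij; simp [him, div_eq_mul_inv]
    · simp [hij, Fin.val_ne_of_ne hij]
  · have hk : ∀ k : Fin m, (i : ℕ) ≠ k := fun k h => him (h ▸ k.isLt)
    simp [hk, diagonal_apply, him]

theorem svdDiag_mul_svdDiagPinv_mul_svdDiag {σ τ : ℕ → ℝ} (h : ∀ i, τ i = 0 → σ i = 0) :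
    svdDiag n m σ * svdDiagPinv n m τ * svdDiag n m τ = svdDiag n m σ := by
  ext i j
  rw [svdDiag_mul_svdDiagPinv, diagonal_mul]
  simp only [svdDiag, of_apply]
  by_cases hij : (i : ℕ) = (j : ℕ)
  · rw [if_pos hij, if_pos hij, if_pos (hij ▸ j.isLt)]
    by_cases hτ : τ i = 0
    · simp [h _ hτ]
    · rw [← Complex.ofReal_mul, div_mul_cancel₀ _ hτ]
  · simp [hij]

theorem isContraction_mul_svdDiag_mul_svdDiagPinv_mul {X Y : Matrix (Fin n) (Fin n) ℂ}
    (hX : X ∈ unitaryGroup (Fin n) ℂ) (hY : Y ∈ unitaryGroup (Fin n) ℂ) {σ τ : ℕ → ℝ}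
    (h : ∀ i, |σ i| ≤ |τ i|) :
    IsContraction (X * svdDiag n m σ * svdDiagPinv n m τ * Yᴴ) := by
  rw [IsContraction, ← cstar_norm_def, Matrix.mul_assoc X, ← star_eq_conjTranspose,
    CStarRing.norm_mul_mem_unitary _ (Unitary.star_mem hY), CStarRing.norm_mem_unitary_mul _ hX,
    svdDiag_mul_svdDiagPinv, l2_opNorm_diagonal]
  refine (pi_norm_le_iff_of_nonneg zero_le_one).mpr fun i => ?_
  split_ifs
  · rw [Complex.norm_real, Real.norm_eq_abs, abs_div]
    exact div_le_one_of_le₀ (h i) (abs_nonneg _)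
  · simp

theorem mul_svdDiagPinv_mul_svd_eq {X X' : Matrix (Fin n) (Fin n) ℂ}
    {Y Y' : Matrix (Fin m) (Fin m) ℂ} (hX' : X' ∈ unitaryGroup (Fin n) ℂ)
    (hY' : Y' ∈ unitaryGroup (Fin m) ℂ) {σ τ : ℕ → ℝ} (h : ∀ i, τ i = 0 → σ i = 0) :
    X * svdDiag n m σ * svdDiagPinv n m τ * X'ᴴ * (X' * svdDiag n m τ * Y') * (Y'ᴴ * Y) =
      X * svdDiag n m σ * Y := by
  have hX'' : X'ᴴ * X' = 1 := mem_unitaryGroup_iff'.mp hX'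
  have hY'' : Y' * Y'ᴴ = 1 := mem_unitaryGroup_iff.mp hY'
  simp only [Matrix.mul_assoc]
  rw [← Matrix.mul_assoc X'ᴴ, hX'', Matrix.one_mul, ← Matrix.mul_assoc Y', hY'', Matrix.one_mul,
    ← Matrix.mul_assoc (svdDiagPinv n m τ), ← Matrix.mul_assoc (svdDiag n m σ),
    ← Matrix.mul_assoc (svdDiag n m σ), svdDiag_mul_svdDiagPinv_mul_svdDiag h]

end

theorem pure_locc_of_singular_values_general {n m : ℕ} (A B : Matrix (Fin n) (Fin m) ℂ)
    (p : ℝ) (hp0 : 0 < p)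
    (XA : Matrix (Fin n) (Fin n) ℂ) (σA : ℕ → ℝ) (YA : Matrix (Fin m) (Fin m) ℂ)
    (hA : IsSVD A XA σA YA)
    (XB : Matrix (Fin n) (Fin n) ℂ) (σB : ℕ → ℝ) (YB : Matrix (Fin m) (Fin m) ℂ)
    (hB : IsSVD B XB σB YB)
    (hσ : ∀ i, p * σB i ^ 2 ≤ σA i ^ 2) :
    (∃ (M : Matrix (Fin n) (Fin n) ℂ) (U : Matrix (Fin m) (Fin m) ℂ),
      IsContraction M ∧ U ∈ Matrix.unitaryGroup (Fin m) ℂ ∧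
      M * A * Uᵀ = Real.sqrt p • B) ∧
    (∀ (M : Matrix (Fin n) (Fin n) ℂ) (U : Matrix (Fin m) (Fin m) ℂ),
      M = Real.sqrt p • (XB * svdDiag n m σB * svdDiagPinv n m σA * XAᴴ) →
      U = YBᵀ * YA.map (starRingEnd ℂ) →
      IsContraction M ∧ U ∈ Matrix.unitaryGroup (Fin m) ℂ ∧
      M * A * Uᵀ = Real.sqrt p • B) := by
  obtain ⟨hXA, hYA, -, -, -, rfl⟩ := hA
  obtain ⟨hXB, hYB, -, -, -, rfl⟩ := hB
  set M₀ := √p • (XB * svdDiag n m σB * svdDiagPinv n m σA * XAᴴ)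
  set U₀ := YBᵀ * YA.map (starRingEnd ℂ)
  have hle : ∀ i, |(√p • σB) i| ≤ |σA i| := fun i =>
    sq_le_sq.mp (by simpa [mul_pow, Real.sq_sqrt hp0.le] using hσ i)
  have hzero : ∀ i, σA i = 0 → (√p • σB) i = 0 := fun i h =>
    abs_nonpos_iff.mp (by simpa [h] using hle i)
  have hM : M₀ = XB * svdDiag n m (√p • σB) * svdDiagPinv n m σA * XAᴴ := by
    rw [← smul_svdDiag, Matrix.mul_smul, Matrix.smul_mul, Matrix.smul_mul]
  have hUT : U₀ᵀ = YAᴴ * YB := by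
    rw [transpose_mul, transpose_transpose]; rfl
  have key : IsContraction M₀ ∧ U₀ ∈ unitaryGroup (Fin m) ℂ ∧
      M₀ * (XA * svdDiag n m σA * YA) * U₀ᵀ = √p • (XB * svdDiag n m σB * YB) := by
    refine ⟨hM ▸ isContraction_mul_svdDiag_mul_svdDiagPinv_mul hXB hXA hle,
      mul_mem (transpose_mem_unitaryGroup_iff.mpr hYB) (map_star_mem_unitaryGroup_iff.mpr hYA),
      ?_⟩
    rw [hM, hUT, mul_svdDiagPinv_mul_svd_eq hXA hYA hzero, ← smul_svdDiag, Matrix.mul_smul,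
      Matrix.smul_mul]
  exact ⟨⟨M₀, U₀, key⟩, by rintro M U rfl rfl; exact key⟩

/-- **Sufficient condition for a pure LOCC transformation.** If `p σᵢ(B)² ≤ σᵢ(A)²` for all `i`,
then there are a contraction `M` and a unitary `U` with `M A Uᵀ = √p B`. Explicitly, given SVDs
`A = X_A Σ_A Y_A`, `B = X_B Σ_B Y_B`, one may take `M = √p X_B Σ_B Σ_A‡ X_A†` and
`U = Y_Bᵀ Y_A*`. -/
theorem pure_locc_of_singular_values {n m : ℕ} (A B : Matrix (Fin n) (Fin m) ℂ)
    (p : ℝ) (hp0 : 0 < p) (hp1 : p ≤ 1)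
    (XA : Matrix (Fin n) (Fin n) ℂ) (σA : ℕ → ℝ) (YA : Matrix (Fin m) (Fin m) ℂ)
    (hA : IsSVD A XA σA YA)
    (XB : Matrix (Fin n) (Fin n) ℂ) (σB : ℕ → ℝ) (YB : Matrix (Fin m) (Fin m) ℂ)
    (hB : IsSVD B XB σB YB)
    (hσ : ∀ i, p * σB i ^ 2 ≤ σA i ^ 2) :
    (∃ (M : Matrix (Fin n) (Fin n) ℂ) (U : Matrix (Fin m) (Fin m) ℂ),
      IsContraction M ∧ U ∈ Matrix.unitaryGroup (Fin m) ℂ ∧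
      M * A * Uᵀ = Real.sqrt p • B) ∧
    (∀ (M : Matrix (Fin n) (Fin n) ℂ) (U : Matrix (Fin m) (Fin m) ℂ),
      M = Real.sqrt p • (XB * svdDiag n m σB * svdDiagPinv n m σA * XAᴴ) →
      U = YBᵀ * YA.map (starRingEnd ℂ) →
      IsContraction M ∧ U ∈ Matrix.unitaryGroup (Fin m) ℂ ∧
      M * A * Uᵀ = Real.sqrt p • B) :=
  pure_locc_of_singular_values_general A B p hp0 XA σA YA hA XB σB YB hB hσ
end

section
/- Let A and Q be n×m complex matrices with SVDs A = X_A Σ_A Y_A and Q = X_Q Σ_Q Y_Q, and suppose A A† = ∑_λ q_λ W_λ† Q Q† W_λ for a finite family of n×n unitaries W_λ and reals q_λ > 0. Define the unitaries U_λ by U_λ* = Y_Q† X_Q† W_λ X_A Y_A and set M_λ = √(q_λ) Q U_λ* A‡, where A‡ is the Moore–Penrose pseudoinverse of A. Then M_λ A U_λᵀ = √(q_λ) Q for every λ; i.e., (M_λ ⊗ U_λ)|A⟩⟩ = √(q_λ)|Q⟩⟩, so the protocol transforms |A⟩⟩ into |Q⟩⟩ deterministically. -/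
open Matrix

/-- `Ad` is the Moore–Penrose pseudoinverse of `A`. -/
def IsMoorePenroseInv {n m : ℕ} (A : Matrix (Fin n) (Fin m) ℂ)
    (Ad : Matrix (Fin m) (Fin n) ℂ) : Prop :=
  A * Ad * A = A ∧ Ad * A * Ad = Ad ∧ (A * Ad).IsHermitian ∧ (Ad * A).IsHermitian

/-!
Since `A Aᴴ ≥ q_λ (W_λᴴ Q)(W_λᴴ Q)ᴴ` in the Loewner order, conjugating by the projector
`1 - A A‡` (which kills `A`) shows `range (W_λᴴ Q) ⊆ range A`. The factors `X Y` of an SVD make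
`Q (X_Q Y_Q)ᴴ` and `(X_A Y_A)ᴴ A` Hermitian; with `V_λ = (X_Q Y_Q)ᴴ W_λ (X_A Y_A)` this turns the
range inclusion into `Q V_λ A‡ A = Q V_λ`. As `V_λ` is unitary and `U_λᵀ = V_λᴴ`,
`M_λ A U_λᵀ = √q_λ Q V_λ V_λᴴ = √q_λ Q`.
-/

open scoped MatrixOrder ComplexOrder

namespace IsMoorePenroseInv

variable {n m : ℕ} {A : Matrix (Fin n) (Fin m) ℂ} {Ad : Matrix (Fin m) (Fin n) ℂ}

lemma pinv_mul_mul_conjTranspose (hAd : IsMoorePenroseInv A Ad) : Ad * A * Aᴴ = Aᴴ := by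
  rw [← hAd.2.2.2.eq, ← conjTranspose_mul, ← Matrix.mul_assoc, hAd.1]

/-- Douglas' range inclusion: `c B Bᴴ ≤ A Aᴴ` forces `range B ⊆ range A = range (A A‡)`. -/
lemma mul_pinv_mul_eq_of_le {ι : Type*} [Fintype ι] (hAd : IsMoorePenroseInv A Ad)
    {B : Matrix (Fin n) ι ℂ} {c : ℝ} (hc : 0 < c) (hBA : c • (B * Bᴴ) ≤ A * Aᴴ) :
    A * Ad * B = B := by
  set P : Matrix (Fin n) (Fin n) ℂ := 1 - A * Ad
  have hP : Pᴴ = P := by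
    simp only [P, conjTranspose_sub, conjTranspose_one, hAd.2.2.1.eq]
  have hPA : P * A = 0 := by
    rw [Matrix.sub_mul, Matrix.one_mul, hAd.1, sub_self]
  have hle := star_left_conjugate_le_conjugate hBA P
  simp only [star_eq_conjTranspose, hP] at hle
  have hrhs : P * (A * Aᴴ) * P = 0 := by
    rw [← Matrix.mul_assoc, hPA, Matrix.zero_mul, Matrix.zero_mul]
  have hlhs : P * (c • (B * Bᴴ)) * P = c • ((P * B) * (P * B)ᴴ) := by
    rw [conjTranspose_mul, hP, Matrix.mul_smul, Matrix.smul_mul]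
    simp only [Matrix.mul_assoc]
  have hnonneg : 0 ≤ c • ((P * B) * (P * B)ᴴ) :=
    ((posSemidef_self_mul_conjTranspose _).smul hc.le).nonneg
  have hzero : c • ((P * B) * (P * B)ᴴ) = 0 :=
    le_antisymm (hlhs ▸ hrhs ▸ hle) hnonneg
  rw [smul_eq_zero_iff_right hc.ne', self_mul_conjTranspose_eq_zero] at hzero
  rwa [Matrix.sub_mul, Matrix.one_mul, sub_eq_zero, eq_comm] at hzero

/-- When `Tᴴ A` is Hermitian, `T` carries `range Aᴴ` into `range A`. -/
lemma mul_pinv_mul_mul_pinv_mul {T : Matrix (Fin n) (Fin m) ℂ} (hAd : IsMoorePenroseInv A Ad)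
    (hT : (Tᴴ * A).IsHermitian) : A * Ad * T * (Ad * A) = A * Ad * T := by
  have h : Tᴴ * (A * Ad) = Aᴴ * T * Ad := by
    rw [← Matrix.mul_assoc, ← hT.eq, conjTranspose_mul, conjTranspose_conjTranspose]
  have hR : Ad * A * (Tᴴ * (A * Ad)) = Tᴴ * (A * Ad) := by
    rw [h, ← Matrix.mul_assoc, ← Matrix.mul_assoc, hAd.pinv_mul_mul_conjTranspose]
  have hR' : Aᴴ * Adᴴ = Ad * A := (conjTranspose_mul Ad A).symm.trans hAd.2.2.2.eq
  simpa only [conjTranspose_mul, conjTranspose_conjTranspose, hAd.2.2.1.eq, hR',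
    Matrix.mul_assoc] using congrArg conjTranspose hR

lemma conjTranspose_mul_mul_pinv_mul {ι : Type*} [Fintype ι] {T : Matrix (Fin n) (Fin m) ℂ}
    {B : Matrix (Fin n) ι ℂ} (hAd : IsMoorePenroseInv A Ad) (hT : (Tᴴ * A).IsHermitian)
    (hB : A * Ad * B = B) : Bᴴ * T * (Ad * A) = Bᴴ * T := by
  have hB' : Bᴴ * (A * Ad) = Bᴴ := by
    conv_rhs => rw [← hB]
    rw [conjTranspose_mul, hAd.2.2.1.eq]
  calc Bᴴ * T * (Ad * A) = Bᴴ * (A * Ad * T * (Ad * A)) := by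
        conv_lhs => rw [← hB']
        simp only [Matrix.mul_assoc]
    _ = Bᴴ * T := by
        rw [hAd.mul_pinv_mul_mul_pinv_mul hT, ← Matrix.mul_assoc, hB']

end IsMoorePenroseInv

lemma isHermitian_svdDiag (n : ℕ) (σ : ℕ → ℝ) : (svdDiag n n σ).IsHermitian := by
  ext i j
  simp only [svdDiag, conjTranspose_apply, of_apply, eq_comm (a := (j : ℕ))]
  split_ifs with h
  · rw [h, Complex.star_def, Complex.conj_ofReal]
  · exact star_zero _

namespace IsSVD

variable {n : ℕ} {O X Y : Matrix (Fin n) (Fin n) ℂ} {σ : ℕ → ℝ}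

lemma isHermitian_conjTranspose_mul (h : IsSVD O X σ Y) : ((X * Y)ᴴ * O).IsHermitian := by
  obtain ⟨hX, -, -, -, -, rfl⟩ := h
  have hXX : Xᴴ * X = 1 := mem_unitaryGroup_iff'.mp hX
  convert isHermitian_conjTranspose_mul_mul Y (isHermitian_svdDiag n σ) using 1
  rw [conjTranspose_mul, Matrix.mul_assoc, ← Matrix.mul_assoc Xᴴ, ← Matrix.mul_assoc Xᴴ, hXX,
    Matrix.one_mul, Matrix.mul_assoc]

lemma isHermitian_mul_conjTranspose (h : IsSVD O X σ Y) : (O * (X * Y)ᴴ).IsHermitian := by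
  obtain ⟨-, hY, -, -, -, rfl⟩ := h
  have hYY : Y * Yᴴ = 1 := mem_unitaryGroup_iff.mp hY
  convert isHermitian_mul_mul_conjTranspose X (isHermitian_svdDiag n σ) using 1
  rw [conjTranspose_mul, Matrix.mul_assoc, ← Matrix.mul_assoc Y, hYY, Matrix.one_mul]

end IsSVD

/-- **Deterministic protocol: the outcomes reach the intermediate state.** Given SVDs
`A = X_A Σ_A Y_A`, `Q = X_Q Σ_Q Y_Q`, unitaries `W_λ` and `q_λ > 0` with
`A A† = ∑_λ q_λ W_λ† Q Q† W_λ`, define the unitaries `U_λ` by `U_λ* = Y_Q† X_Q† W_λ X_A Y_A`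
and set `M_λ = √q_λ Q U_λ* A‡`. Then `M_λ A U_λᵀ = √q_λ Q` for every `λ`, i.e.
`(M_λ ⊗ U_λ)|A⟩⟩ = √q_λ |Q⟩⟩`: the protocol transforms `|A⟩⟩` into `|Q⟩⟩` deterministically. -/
theorem deterministic_protocol_reaches_target {n K : ℕ} (A Q : Matrix (Fin n) (Fin n) ℂ)
    (XA : Matrix (Fin n) (Fin n) ℂ) (σA : ℕ → ℝ) (YA : Matrix (Fin n) (Fin n) ℂ)
    (hA : IsSVD A XA σA YA)
    (XQ : Matrix (Fin n) (Fin n) ℂ) (σQ : ℕ → ℝ) (YQ : Matrix (Fin n) (Fin n) ℂ)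
    (hQ : IsSVD Q XQ σQ YQ)
    (W : Fin K → Matrix (Fin n) (Fin n) ℂ) (hW : ∀ l, W l ∈ Matrix.unitaryGroup (Fin n) ℂ)
    (q : Fin K → ℝ) (hq : ∀ l, 0 < q l)
    (hsum : A * Aᴴ = ∑ l, q l • ((W l)ᴴ * (Q * Qᴴ) * W l))
    (Ad : Matrix (Fin n) (Fin n) ℂ) (hAd : IsMoorePenroseInv A Ad)
    (U : Fin K → Matrix (Fin n) (Fin n) ℂ)
    (hU : U = fun l => (YQᴴ * XQᴴ * W l * XA * YA).map (starRingEnd ℂ))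
    (M : Fin K → Matrix (Fin n) (Fin n) ℂ)
    (hM : M = fun l => Real.sqrt (q l) • (Q * (YQᴴ * XQᴴ * W l * XA * YA) * Ad)) :
    ∀ l, M l * A * (U l)ᵀ = Real.sqrt (q l) • Q := by
  intro l
  subst hU hM
  set V := YQᴴ * XQᴴ * W l * XA * YA
  have hVV : V * Vᴴ = 1 := mem_unitaryGroup_iff.mp <|
    mul_mem (mul_mem (mul_mem (mul_mem (Unitary.star_mem hQ.2.1) (Unitary.star_mem hQ.1))
      (hW l)) hA.1) hA.2.1
  have hle : q l • ((W l)ᴴ * Q * ((W l)ᴴ * Q)ᴴ) ≤ A * Aᴴ := by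
    rw [hsum, conjTranspose_mul, conjTranspose_conjTranspose, Matrix.mul_assoc,
      ← Matrix.mul_assoc Q, ← Matrix.mul_assoc]
    exact Finset.single_le_sum
      (fun k _ => (((posSemidef_self_mul_conjTranspose Q).conjTranspose_mul_mul_same (W k)).smul
        (hq k).le).nonneg) (Finset.mem_univ l)
  have hrange : A * Ad * ((W l)ᴴ * (Q * (XQ * YQ)ᴴ)) = (W l)ᴴ * (Q * (XQ * YQ)ᴴ) := by
    rw [← Matrix.mul_assoc (W l)ᴴ, ← Matrix.mul_assoc, hAd.mul_pinv_mul_eq_of_le (hq l) hle]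
  have hQV : Q * V * (Ad * A) = Q * V := by
    have h := hAd.conjTranspose_mul_mul_pinv_mul hA.isHermitian_conjTranspose_mul hrange
    rw [conjTranspose_mul, hQ.isHermitian_mul_conjTranspose.eq, conjTranspose_conjTranspose] at h
    simpa only [V, conjTranspose_mul, Matrix.mul_assoc] using h
  dsimp only
  rw [show (V.map (starRingEnd ℂ))ᵀ = Vᴴ from rfl, Matrix.smul_mul, Matrix.smul_mul,
    Matrix.mul_assoc (Q * V) Ad A, hQV, Matrix.mul_assoc, hVV, Matrix.mul_one]
end

section
/- Let A and Q be n×m complex matrices and suppose A A† = ∑_λ q_λ W_λ† Q Q† W_λ for a finite family of n×n unitaries W_λ and reals q_λ > 0. Then there exist n×n matrices M_λ, each a contraction, with ∑_λ M_λ† M_λ = P_A (the orthogonal projector onto the range of A, so in particular ∑_λ M_λ† M_λ ≤ I), such that M_λ A A† M_λ† = q_λ Q Q† for every λ. Moreover, there exist m×m unitaries U_λ such that M_λ A U_λᵀ = √(q_λ) Q for every λ. -/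
open Matrix
open scoped ComplexOrder InnerProductSpace

section Aux

lemma myToEuclideanLin_mul {a b c : ℕ} (Z : Matrix (Fin a) (Fin b) ℂ)
    (W : Matrix (Fin b) (Fin c) ℂ) :
    Matrix.toEuclideanLin (Z * W) = (Matrix.toEuclideanLin Z).comp (Matrix.toEuclideanLin W) := by
  refine LinearMap.ext fun v => ?_
  simp [Matrix.toEuclideanLin_apply, Matrix.mulVec_mulVec]

lemma trace_mul_conj_nonneg {n m : ℕ} (Y : Matrix (Fin n) (Fin m) ℂ) :
    (0:ℂ) ≤ (Y * Yᴴ).trace := by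
  rw [Matrix.trace]
  apply Finset.sum_nonneg
  intro i _
  rw [Matrix.diag_apply, Matrix.mul_apply]
  apply Finset.sum_nonneg
  intro j _
  rw [Matrix.conjTranspose_apply]
  exact mul_star_self_nonneg _

lemma eq_zero_of_trace_mul_conj_eq_zero {n m : ℕ} {Y : Matrix (Fin n) (Fin m) ℂ}
    (h : (Y * Yᴴ).trace = 0) : Y = 0 := by
  rw [Matrix.trace] at h
  have h1 := (Finset.sum_eq_zero_iff_of_nonneg (fun i _ => by
    rw [Matrix.diag_apply, Matrix.mul_apply]
    apply Finset.sum_nonneg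
    intro j _
    rw [Matrix.conjTranspose_apply]
    exact mul_star_self_nonneg _)).mp h
  ext i j
  have h2 := h1 i (Finset.mem_univ i)
  rw [Matrix.diag_apply, Matrix.mul_apply] at h2
  have h3 := (Finset.sum_eq_zero_iff_of_nonneg (fun j _ => by
    rw [Matrix.conjTranspose_apply]
    exact mul_star_self_nonneg _)).mp h2 j (Finset.mem_univ j)
  rw [Matrix.conjTranspose_apply] at h3
  rcases mul_eq_zero.mp h3 with h4 | h4
  · simpa using h4
  · simpa using star_eq_zero.mp h4

lemma isContraction_of_posSemidef {n : ℕ} {M : Matrix (Fin n) (Fin n) ℂ}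
    (h : (1 - Mᴴ * M).PosSemidef) : IsContraction M := by
  rw [IsContraction]
  apply ContinuousLinearMap.opNorm_le_bound _ zero_le_one
  intro x
  rw [one_mul, ← Real.sqrt_sq (norm_nonneg _), ← Real.sqrt_sq (norm_nonneg x)]
  apply Real.sqrt_le_sqrt
  set v : Fin n → ℂ := WithLp.equiv 2 _ x with hv
  have hxv : (WithLp.equiv 2 _) (Matrix.toEuclideanCLM (𝕜 := ℂ) M x) = M *ᵥ v :=
    Matrix.ofLp_toEuclideanCLM M x
  have h1 := inner_self_eq_norm_sq_to_K (𝕜 := ℂ) (Matrix.toEuclideanCLM (𝕜 := ℂ) M x)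
  have h2 := inner_self_eq_norm_sq_to_K (𝕜 := ℂ) x
  rw [EuclideanSpace.inner_eq_star_dotProduct, Matrix.ofLp_toEuclideanCLM] at h1
  rw [EuclideanSpace.inner_eq_star_dotProduct] at h2
  have h3 : star (M *ᵥ v) ⬝ᵥ (M *ᵥ v) = star v ⬝ᵥ (Mᴴ * M) *ᵥ v := by
    rw [← Matrix.mulVec_mulVec, Matrix.dotProduct_mulVec (star v), Matrix.star_mulVec]
  have h4 := h.dotProduct_mulVec_nonneg v
  rw [Matrix.sub_mulVec, dotProduct_sub, sub_nonneg, Matrix.one_mulVec] at h4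
  have h5 : (RCLike.ofReal (K := ℂ) ‖Matrix.toEuclideanCLM (𝕜 := ℂ) M x‖) ^ 2
      ≤ (RCLike.ofReal (K := ℂ) ‖x‖) ^ 2 := by
    rw [← h1, ← h2, dotProduct_comm, dotProduct_comm x.ofLp]; exact (le_of_eq h3).trans h4
  exact_mod_cast h5

lemma posSemidef_sum {n K : ℕ} (s : Finset (Fin K)) (f : Fin K → Matrix (Fin n) (Fin n) ℂ)
    (hf : ∀ i ∈ s, (f i).PosSemidef) : (∑ i ∈ s, f i).PosSemidef := by
  classical
  induction s using Finset.induction_on with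
  | empty => simpa using Matrix.PosSemidef.zero
  | insert a s hx ih =>
    rw [Finset.sum_insert hx]
    exact ((hf _ (Finset.mem_insert_self _ _)).add
      (ih fun i hi => hf i (Finset.mem_insert_of_mem hi)))

lemma myConjTranspose_transpose {a b : ℕ} (V : Matrix (Fin a) (Fin b) ℂ) :
    (Vᵀ)ᴴ = (Vᴴ)ᵀ := by
  ext i j
  simp [Matrix.conjTranspose_apply]

lemma myToEuclideanLin_one' {a : ℕ} :
    Matrix.toEuclideanLin (1 : Matrix (Fin a) (Fin a) ℂ) = LinearMap.id := by
  refine LinearMap.ext fun v => ?_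
  simp [Matrix.toEuclideanLin_apply]

lemma exists_unitary_of_gram_eq {n m : ℕ} (X Y : Matrix (Fin n) (Fin m) ℂ)
    (h : X * Xᴴ = Y * Yᴴ) :
    ∃ U ∈ Matrix.unitaryGroup (Fin m) ℂ, X = Y * U := by
  set c := Matrix.toEuclideanLin Xᴴ with hc
  set d := Matrix.toEuclideanLin Yᴴ with hd
  have key : ∀ (Z : Matrix (Fin n) (Fin m) ℂ) (v w : EuclideanSpace ℂ (Fin n)),
      ⟪Matrix.toEuclideanLin Zᴴ v, Matrix.toEuclideanLin Zᴴ w⟫_ℂ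
        = ⟪v, Matrix.toEuclideanLin (Z * Zᴴ) w⟫_ℂ := by
    intro Z v w
    have hadj : Matrix.toEuclideanLin Z = LinearMap.adjoint (Matrix.toEuclideanLin Zᴴ) := by
      simpa using Matrix.toEuclideanLin_conjTranspose_eq_adjoint Zᴴ
    rw [myToEuclideanLin_mul, LinearMap.comp_apply, hadj, LinearMap.adjoint_inner_right]
  have hinner : ∀ v w, ⟪c v, c w⟫_ℂ = ⟪d v, d w⟫_ℂ := by
    intro v w; rw [hc, hd, key X, key Y, h]
  have hnorm : ∀ v, ‖c v‖ = ‖d v‖ := by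
    intro v
    have h1 := hinner v v
    rw [inner_self_eq_norm_sq_to_K, inner_self_eq_norm_sq_to_K] at h1
    have h2 : ‖c v‖ ^ 2 = ‖d v‖ ^ 2 := by exact_mod_cast h1
    exact (sq_eq_sq₀ (norm_nonneg _) (norm_nonneg _)).mp h2
  have hker : LinearMap.ker d ≤ LinearMap.ker c := by
    intro v hv
    rw [LinearMap.mem_ker] at hv ⊢
    have := hnorm v
    rw [hv, norm_zero, norm_eq_zero] at this
    exact this
  set S := LinearMap.range d with hS
  set f : S →ₗ[ℂ] EuclideanSpace ℂ (Fin m) :=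
    ((LinearMap.ker d).liftQ c hker).comp d.quotKerEquivRange.symm.toLinearMap with hf
  have hfd : ∀ v, f ⟨d v, LinearMap.mem_range_self d v⟩ = c v := by
    intro v
    rw [hf]
    simp only [LinearMap.comp_apply, LinearEquiv.coe_coe]
    rw [d.quotKerEquivRange_symm_apply_image v (LinearMap.mem_range_self d v)]
    rfl
  set L : S →ₗᵢ[ℂ] EuclideanSpace ℂ (Fin m) :=
    ⟨f, by rintro ⟨-, v, rfl⟩; rw [hfd v]; exact hnorm v⟩ with hL
  set vhat := L.extend with hvhat
  have hext : ∀ w, vhat (d w) = c w := by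
    intro w
    have := L.extend_apply ⟨d w, LinearMap.mem_range_self d w⟩
    rw [hvhat]
    rw [show ((⟨d w, LinearMap.mem_range_self d w⟩ : S) : EuclideanSpace ℂ (Fin m)) = d w from rfl] at this
    rw [this]
    exact hfd w
  set V : Matrix (Fin m) (Fin m) ℂ :=
    (Matrix.toEuclideanLin (𝕜 := ℂ) (m := Fin m) (n := Fin m)).symm vhat.toLinearMap with hVdef
  have hV : Matrix.toEuclideanLin V = vhat.toLinearMap := by
    rw [hVdef]; exact (Matrix.toEuclideanLin (𝕜 := ℂ)).apply_symm_apply _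
  have hVu : V ∈ Matrix.unitaryGroup (Fin m) ℂ := by
    rw [Matrix.mem_unitaryGroup_iff', Matrix.star_eq_conjTranspose]
    apply (Matrix.toEuclideanLin (𝕜 := ℂ)).injective
    rw [myToEuclideanLin_mul, myToEuclideanLin_one',
      Matrix.toEuclideanLin_conjTranspose_eq_adjoint, hV]
    refine LinearMap.ext fun x => ?_
    refine ext_inner_left ℂ fun v => ?_
    rw [LinearMap.comp_apply, LinearMap.adjoint_inner_right]
    simp only [LinearIsometry.coe_toLinearMap, LinearMap.id_apply]
    exact vhat.inner_map_map v x
  have hC : Xᴴ = V * Yᴴ := by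
    apply (Matrix.toEuclideanLin (𝕜 := ℂ)).injective
    rw [myToEuclideanLin_mul, hV]
    refine LinearMap.ext fun w => ?_
    exact (hext w).symm
  refine ⟨Vᴴ, ?_, ?_⟩
  · rw [← Matrix.star_eq_conjTranspose]
    exact Unitary.star_mem hVu
  · have := congrArg Matrix.conjTranspose hC
    rwa [Matrix.conjTranspose_conjTranspose, Matrix.conjTranspose_mul,
      Matrix.conjTranspose_conjTranspose] at this

end Aux

set_option maxHeartbeats 1000000 in
/-- **Existence of the deterministic protocol.** If `A A† = ∑_λ q_λ W_λ† Q Q† W_λ` with `W_λ`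
unitary and `q_λ > 0`, then there are contractions `M_λ` with `∑_λ M_λ† M_λ = P_A` (the
orthogonal projector onto the range of `A`, so in particular `∑_λ M_λ† M_λ ≤ I`) such that
`M_λ A A† M_λ† = q_λ Q Q†` for all `λ`; moreover there are unitaries `U_λ` with
`M_λ A U_λᵀ = √q_λ Q` for all `λ`. -/
theorem exists_deterministic_protocol {n m K : ℕ} (A Q : Matrix (Fin n) (Fin m) ℂ)
    (W : Fin K → Matrix (Fin n) (Fin n) ℂ) (hW : ∀ l, W l ∈ Matrix.unitaryGroup (Fin n) ℂ)
    (q : Fin K → ℝ) (hq : ∀ l, 0 < q l)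
    (hsum : A * Aᴴ = ∑ l, q l • ((W l)ᴴ * (Q * Qᴴ) * W l)) :
    ∃ M : Fin K → Matrix (Fin n) (Fin n) ℂ,
      (∀ l, IsContraction (M l)) ∧
      (∃ P : Matrix (Fin n) (Fin n) ℂ, P.IsHermitian ∧ P * P = P ∧
        LinearMap.range P.mulVecLin = LinearMap.range A.mulVecLin ∧
        ∑ l, (M l)ᴴ * M l = P) ∧
      (1 - ∑ l, (M l)ᴴ * M l).PosSemidef ∧
      (∀ l, M l * (A * Aᴴ) * (M l)ᴴ = q l • (Q * Qᴴ)) ∧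
      (∃ U : Fin K → Matrix (Fin m) (Fin m) ℂ,
        (∀ l, U l ∈ Matrix.unitaryGroup (Fin m) ℂ) ∧
        (∀ l, M l * A * (U l)ᵀ = Real.sqrt (q l) • Q)) := by
  classical
  have hB : (A * Aᴴ).PosSemidef := Matrix.posSemidef_self_mul_conjTranspose A
  set B := A * Aᴴ with hBdef
  set V0 : Matrix (Fin n) (Fin n) ℂ := (hB.1.eigenvectorUnitary : Matrix (Fin n) (Fin n) ℂ) with hV0
  have hu1 : star V0 * V0 = 1 := Matrix.mem_unitaryGroup_iff'.mp hB.1.eigenvectorUnitary.2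
  have hu2 : V0 * star V0 = 1 := Matrix.mem_unitaryGroup_iff.mp hB.1.eigenvectorUnitary.2
  set dE : Fin n → ℝ := hB.1.eigenvalues with hdE
  have hdE0 : ∀ i, 0 ≤ dE i := hB.eigenvalues_nonneg
  have hspec : B = V0 * diagonal (RCLike.ofReal ∘ dE) * star V0 := hB.1.spectral_theorem
  -- diagonal conjugation algebra
  have hmul : ∀ f g' : Fin n → ℂ, (V0 * diagonal f * star V0) * (V0 * diagonal g' * star V0)
      = V0 * diagonal (fun i => f i * g' i) * star V0 := by
    intro f g'
    calc (V0 * diagonal f * star V0) * (V0 * diagonal g' * star V0)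
        = V0 * (diagonal f * ((star V0 * V0) * (diagonal g' * star V0))) := by
          simp only [Matrix.mul_assoc]
      _ = V0 * diagonal (fun i => f i * g' i) * star V0 := by
          rw [hu1, one_mul, ← Matrix.mul_assoc (diagonal f) (diagonal g') (star V0),
            Matrix.diagonal_mul_diagonal]
          simp only [Matrix.mul_assoc]
  set g : Fin n → ℂ := fun i => if dE i = 0 then 0 else ((Real.sqrt (dE i) : ℝ) : ℂ)⁻¹ with hg
  set p : Fin n → ℂ := fun i => if dE i = 0 then 0 else 1 with hp
  set Sinv := V0 * diagonal g * star V0 with hSinv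
  set P := V0 * diagonal p * star V0 with hPdef
  have hgdg : ∀ i, g i * (RCLike.ofReal ∘ dE) i * g i = p i := by
    intro i
    by_cases h : dE i = 0
    · simp [hg, hp, h]
    · have hpos : 0 < dE i := lt_of_le_of_ne (hdE0 i) (Ne.symm h)
      have hs : Real.sqrt (dE i) ≠ 0 := by positivity
      have hsd : ((dE i : ℝ) : ℂ) = (Real.sqrt (dE i) : ℂ) * (Real.sqrt (dE i) : ℂ) := by
        rw [← Complex.ofReal_mul, Real.mul_self_sqrt (hdE0 i)]
      simp only [hg, hp, Function.comp_apply, if_neg h]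
      rw [show ((RCLike.ofReal (dE i)) : ℂ) = ((dE i : ℝ) : ℂ) from rfl, hsd]
      have hsC : ((Real.sqrt (dE i) : ℝ) : ℂ) ≠ 0 := by exact_mod_cast hs
      field_simp
  have hdgg : ∀ i, (RCLike.ofReal ∘ dE) i * g i * g i = p i := by
    intro i
    have := hgdg i
    rw [← this]; ring
  have hpd : ∀ i, p i * (RCLike.ofReal ∘ dE) i = (RCLike.ofReal ∘ dE) i := by
    intro i
    by_cases h : dE i = 0 <;> simp [hp, h]
  have hpp : ∀ i, p i * p i = p i := by
    intro i; by_cases h : dE i = 0 <;> simp [hp, h]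
  -- key identities
  have hSBS : Sinv * B * Sinv = P := by
    rw [hspec, hSinv, hmul, hmul, hPdef]
    congr 1
    · congr 1
      exact congrArg diagonal (funext fun i => hgdg i)
  have hPB : P * B = B := by
    rw [hspec, hPdef, hmul]
    congr 2
    exact congrArg diagonal (funext fun i => hpd i)
  have hPBgg : B * (Sinv * Sinv) = P := by
    rw [hspec, hSinv, ← Matrix.mul_assoc, hmul, hmul, hPdef]
    congr 2
    exact congrArg diagonal (funext fun i => hdgg i)
  have hPP : P * P = P := by
    rw [hPdef, hmul]
    congr 2
    exact congrArg diagonal (funext fun i => hpp i)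
  have hermAux : ∀ f : Fin n → ℂ, (∀ i, star (f i) = f i) →
      (V0 * diagonal f * star V0).IsHermitian := by
    intro f hf
    show (V0 * diagonal f * star V0)ᴴ = V0 * diagonal f * star V0
    rw [Matrix.conjTranspose_mul, Matrix.conjTranspose_mul, Matrix.diagonal_conjTranspose,
      ← Matrix.star_eq_conjTranspose (star V0), star_star, ← Matrix.star_eq_conjTranspose V0]
    have hsf : star f = f := funext fun i => hf i
    rw [hsf, Matrix.mul_assoc]
  have hPH : P.IsHermitian := hermAux p fun i => by
    by_cases h : dE i = 0 <;> simp [hp, h]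
  have hSinvH : Sinv.IsHermitian := hermAux g fun i => by
    by_cases h : dE i = 0 <;> simp [hg, h, ← Complex.ofReal_inv]
  -- positivity of 1 - P
  have h1P : (1 - P).PosSemidef := by
    have e3 : (1 : Matrix (Fin n) (Fin n) ℂ) - P
        = V0 * diagonal (fun i => 1 - p i) * (V0)ᴴ := by
      have e4 : diagonal (fun i => 1 - p i) = 1 - diagonal p := by
        rw [← Matrix.diagonal_one, ← Matrix.diagonal_sub]
      rw [e4, Matrix.mul_sub, Matrix.sub_mul, Matrix.mul_one, ← Matrix.star_eq_conjTranspose,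
        hu2, hPdef]
    rw [e3]
    refine Matrix.PosSemidef.mul_mul_conjTranspose_same ?_ V0
    refine Matrix.posSemidef_diagonal_iff.mpr fun i => ?_
    by_cases h : dE i = 0 <;> simp [hp, h]
  clear_value V0 Sinv P
  clear hspec hmul hPdef hSinv hV0 hg hp hdE
  -- square root of Q Qᴴ
  have hQps : (Q * Qᴴ).PosSemidef := Matrix.posSemidef_self_mul_conjTranspose Q
  obtain ⟨T, hTH, hTT⟩ : ∃ T : Matrix (Fin n) (Fin n) ℂ, Tᴴ = T ∧ T * T = Q * Qᴴ :=
    by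
      open scoped MatrixOrder in
      obtain ⟨X, hX, -, hXX⟩ := CFC.exists_sqrt_of_isSelfAdjoint_of_quasispectrumRestricts hQps.1
        (QuasispectrumRestricts.nnreal_of_nonneg hQps.nonneg)
      exact ⟨X, hX, hXX⟩
  -- the projector absorbs (W l)ᴴ * T
  have hPWT : ∀ l, P * ((W l)ᴴ * T) = (W l)ᴴ * T := by
    intro l
    have h1mPB : (1 - P) * B = 0 := by
      rw [Matrix.sub_mul, Matrix.one_mul, hPB, sub_self]
    set Z : Fin K → Matrix (Fin n) (Fin n) ℂ := fun l => (1 - P) * ((W l)ᴴ * T) with hZ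
    have hZZ : ∀ l, Z l * (Z l)ᴴ = (1 - P) * ((W l)ᴴ * (Q * Qᴴ) * W l) * (1 - P)ᴴ := by
      intro l
      rw [hZ]
      simp only [Matrix.conjTranspose_mul, hTH, Matrix.conjTranspose_conjTranspose]
      rw [← hTT]
      simp only [Matrix.mul_assoc]
    have hZsum : ∑ l, q l • (Z l * (Z l)ᴴ) = 0 := by
      have : ∑ l, q l • (Z l * (Z l)ᴴ) = (1 - P) * B * (1 - P)ᴴ := by
        rw [hsum]
        rw [Finset.mul_sum, Finset.sum_mul]
        refine Finset.sum_congr rfl fun l _ => ?_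
        rw [hZZ l, Matrix.mul_smul, Matrix.smul_mul]
      rw [this, h1mPB, Matrix.zero_mul]
    have hZ0 : ∀ l, Z l = 0 := by
      intro l
      have hs := congrArg Matrix.trace hZsum
      rw [Matrix.trace_sum, Matrix.trace_zero] at hs
      have hexp : ∀ l', (q l' • (Z l' * (Z l')ᴴ)).trace
          = (q l' : ℂ) * (Z l' * (Z l')ᴴ).trace := by
        intro l'
        rw [Matrix.trace_smul, Complex.real_smul]
      rw [Finset.sum_congr rfl fun l' _ => hexp l'] at hs
      have hterm : ∀ l' ∈ Finset.univ, (0:ℂ) ≤ (q l' : ℂ) * (Z l' * (Z l')ᴴ).trace := by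
        intro l' _
        exact mul_nonneg (by exact_mod_cast (hq l').le) (trace_mul_conj_nonneg (Z l'))
      have h0 := (Finset.sum_eq_zero_iff_of_nonneg hterm).mp hs l (Finset.mem_univ l)
      have hql : (q l : ℂ) ≠ 0 := by exact_mod_cast (hq l).ne'
      exact eq_zero_of_trace_mul_conj_eq_zero ((mul_eq_zero.mp h0).resolve_left hql)
    have h2 : (1 - P) * ((W l)ᴴ * T) = 0 := hZ0 l
    rw [Matrix.sub_mul, Matrix.one_mul, sub_eq_zero] at h2
    exact h2.symm
  -- the measurement operators
  set M : Fin K → Matrix (Fin n) (Fin n) ℂ :=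
    fun l => Real.sqrt (q l) • (T * W l * Sinv) with hM
  have hMdef : ∀ l, M l = Real.sqrt (q l) • (T * W l * Sinv) := fun l => rfl
  have hMH : ∀ l, (M l)ᴴ = Real.sqrt (q l) • (Sinv * ((W l)ᴴ * T)) := by
    intro l
    rw [hMdef l, Matrix.conjTranspose_smul, star_trivial]
    congr 1
    rw [Matrix.conjTranspose_mul, hSinvH.eq, Matrix.conjTranspose_mul, hTH]
  have hMM : ∀ l, (M l)ᴴ * M l = q l • (Sinv * ((W l)ᴴ * (Q * Qᴴ) * W l) * Sinv) := by
    intro l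
    rw [hMH l, hMdef l, Matrix.smul_mul, Matrix.mul_smul, smul_smul,
      Real.mul_self_sqrt (hq l).le]
    congr 1
    rw [← hTT]
    simp only [Matrix.mul_assoc]
  have hMsum : ∑ l, (M l)ᴴ * M l = P := by
    have e1 : ∑ l, (M l)ᴴ * M l = ∑ l, q l • (Sinv * ((W l)ᴴ * (Q * Qᴴ) * W l) * Sinv) :=
      Finset.sum_congr rfl fun l _ => hMM l
    have e2 : ∑ l, q l • (Sinv * ((W l)ᴴ * (Q * Qᴴ) * W l) * Sinv) = Sinv * B * Sinv := by
      rw [hsum, Finset.mul_sum, Finset.sum_mul]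
      refine Finset.sum_congr rfl fun l _ => ?_
      rw [Matrix.mul_smul, Matrix.smul_mul]
    rw [e1, e2, hSBS]
  -- M l * B * (M l)ᴴ = q l • Q Qᴴ
  have hWW : ∀ l, W l * (W l)ᴴ = 1 := by
    intro l
    rw [← Matrix.star_eq_conjTranspose]
    exact Matrix.mem_unitaryGroup_iff.mp (hW l)
  have hMBM : ∀ l, M l * B * (M l)ᴴ = q l • (Q * Qᴴ) := by
    intro l
    have hTWP : T * W l * P = T * W l := by
      have h1 := congrArg Matrix.conjTranspose (hPWT l)
      rw [Matrix.conjTranspose_mul, Matrix.conjTranspose_mul, hTH,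
        Matrix.conjTranspose_conjTranspose, hPH.eq] at h1
      exact h1
    rw [hMdef l, hMH l, Matrix.smul_mul, Matrix.smul_mul, Matrix.mul_smul, smul_smul,
      Real.mul_self_sqrt (hq l).le]
    congr 1
    calc (T * W l * Sinv) * B * (Sinv * ((W l)ᴴ * T))
        = (T * W l) * (Sinv * B * Sinv) * ((W l)ᴴ * T) := by simp only [Matrix.mul_assoc]
      _ = (T * W l * P) * ((W l)ᴴ * T) := by rw [hSBS]
      _ = (T * W l) * ((W l)ᴴ * T) := by rw [hTWP]
      _ = T * (W l * (W l)ᴴ) * T := by simp only [Matrix.mul_assoc]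
      _ = Q * Qᴴ := by rw [hWW l, Matrix.mul_one, hTT]
  -- range equality
  have hrange : LinearMap.range P.mulVecLin = LinearMap.range A.mulVecLin := by
    have rPB : LinearMap.range P.mulVecLin ≤ LinearMap.range B.mulVecLin := by
      rw [← hPBgg, Matrix.mulVecLin_mul]
      exact LinearMap.range_comp_le_range _ _
    have rBP : LinearMap.range B.mulVecLin ≤ LinearMap.range P.mulVecLin := by
      conv_lhs => rw [← hPB]
      rw [Matrix.mulVecLin_mul]
      exact LinearMap.range_comp_le_range _ _
    have rBA : LinearMap.range B.mulVecLin ≤ LinearMap.range A.mulVecLin := by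
      rw [hBdef, Matrix.mulVecLin_mul]
      exact LinearMap.range_comp_le_range _ _
    have h1 : B.rank = A.rank := by
      rw [hBdef]
      exact Matrix.rank_self_mul_conjTranspose A
    have hBA : LinearMap.range B.mulVecLin = LinearMap.range A.mulVecLin :=
      Submodule.eq_of_le_of_finrank_le rBA h1.ge
    exact le_antisymm (rPB.trans rBA) (hBA ▸ rBP)
  -- contractions
  have hcontr : ∀ l, IsContraction (M l) := by
    intro l
    have hPm : (P - (M l)ᴴ * M l).PosSemidef := by
      have e5 : P - (M l)ᴴ * M l = ∑ l' ∈ Finset.univ.erase l, (M l')ᴴ * M l' := by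
        rw [← hMsum, ← Finset.add_sum_erase _ _ (Finset.mem_univ l), add_sub_cancel_left]
      rw [e5]
      exact posSemidef_sum _ _ fun i _ => Matrix.posSemidef_conjTranspose_mul_self _
    refine isContraction_of_posSemidef ?_
    have e6 : (1 : Matrix (Fin n) (Fin n) ℂ) - (M l)ᴴ * M l
        = (1 - P) + (P - (M l)ᴴ * M l) := by rw [sub_add_sub_cancel]
    rw [e6]
    exact h1P.add hPm
  -- unitaries
  have hXY : ∀ l, (M l * A) * (M l * A)ᴴ
      = ((Real.sqrt (q l)) • Q) * ((Real.sqrt (q l)) • Q)ᴴ := by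
    intro l
    rw [Matrix.conjTranspose_mul]
    have e7 : M l * A * (Aᴴ * (M l)ᴴ) = M l * B * (M l)ᴴ := by
      rw [hBdef]
      simp only [Matrix.mul_assoc]
    rw [e7, hMBM l, Matrix.conjTranspose_smul, star_trivial, Matrix.smul_mul,
      Matrix.mul_smul, smul_smul, Real.mul_self_sqrt (hq l).le]
  choose U0 hU0mem hU0eq using fun l =>
    exists_unitary_of_gram_eq (M l * A) (Real.sqrt (q l) • Q) (hXY l)
  refine ⟨M, hcontr, ⟨P, hPH, hPP, hrange, hMsum⟩, by rw [hMsum]; exact h1P, hMBM,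
    ⟨fun l => ((U0 l)ᴴ)ᵀ, fun l => ?_, fun l => ?_⟩⟩
  · rw [Matrix.mem_unitaryGroup_iff]
    have hmem : (U0 l)ᴴ ∈ Matrix.unitaryGroup (Fin m) ℂ := by
      rw [← Matrix.star_eq_conjTranspose]
      exact Unitary.star_mem (hU0mem l)
    have h8 : ((U0 l)ᴴ)ᴴ * (U0 l)ᴴ = 1 := by
      rw [← Matrix.star_eq_conjTranspose ((U0 l)ᴴ)]
      exact Matrix.mem_unitaryGroup_iff'.mp hmem
    rw [Matrix.star_eq_conjTranspose, myConjTranspose_transpose,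
      ← Matrix.transpose_mul, h8, Matrix.transpose_one]
  · rw [Matrix.transpose_transpose, hU0eq l, Matrix.mul_assoc]
    have h9 : U0 l * (U0 l)ᴴ = 1 := by
      rw [← Matrix.star_eq_conjTranspose]
      exact Matrix.mem_unitaryGroup_iff.mp (hU0mem l)
    rw [h9, Matrix.mul_one]
end
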